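/- arXiv:1510.08739 — 2 statements merged into one kernel-verified Lean document; each statement's English description precedes it below -/
import Mathlib

section
/- Let A ⊆ 𝔽₂ⁿ, W ≤ 𝔽₂ⁿ a subspace, d, r₀ ≥ 1 integers, and x₁,…,x_d ∈ 𝔽₂ⁿ with linearly independent images mod W. Suppose there is j ∈ {0,…,r₀} such that for every nonempty I ⊆ [d], the density of A on the coset (∑_{i∈I} x_i) + W lies in [j/r₀, (j+1)/r₀). Set V = W + ⟨x₁,…,x_d⟩. Then for every r ∈ W^⊥ \ V^⊥, |(1_A μ_V)^∧(r)| ≤ 2^{-d} + 1/r₀. -/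
open scoped Classical
open Finset
noncomputable section

/-- Dot product on `𝔽₂ⁿ`. -/
def dot2 {n : ℕ} (r x : Fin n → ZMod 2) : ZMod 2 := ∑ i, r i * x i

/-- The additive character `t ↦ (-1)^t` of `𝔽₂`. -/
def chi2 (t : ZMod 2) : ℂ := (-1 : ℂ) ^ t.val

/-- `(1_A μ_{x+W})^∧(r) = |W|⁻¹ ∑_{w ∈ W} 1_A(x+w) (-1)^{r·(x+w)}`. -/
def fcoset2 {n : ℕ} (A : Set (Fin n → ZMod 2)) (x : Fin n → ZMod 2)
    (W : Submodule (ZMod 2) (Fin n → ZMod 2)) (r : Fin n → ZMod 2) : ℂ :=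
  (∑ w : W, if x + (w : Fin n → ZMod 2) ∈ A then
      chi2 (dot2 r (x + (w : Fin n → ZMod 2))) else 0) / (Fintype.card W)

/-- The density `𝔼_{x+W} 1_A` of `A` on the coset `x + W`. -/
def dens2 {n : ℕ} (A : Set (Fin n → ZMod 2)) (x : Fin n → ZMod 2)
    (W : Submodule (ZMod 2) (Fin n → ZMod 2)) : ℝ :=
  (∑ w : W, if x + (w : Fin n → ZMod 2) ∈ A then (1 : ℝ) else 0) / (Fintype.card W)

/-!
With `x_c = ∑ cᵢ xᵢ` for `c ∈ 𝔽₂^d`, independence of the `xᵢ` modulo `W` makes `V` the disjoint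
union of the cosets `x_c + W`, and since `r ⊥ W` the coefficient becomes
`2^{-d} ∑_c (-1)^{r·x_c} 𝔼_{x_c+W} 1_A`. As `r ∉ V^⊥`, `c ↦ r·x_c` is a nontrivial character of
`𝔽₂^d`, so its signs sum to zero and the common level `j/r₀` may be subtracted from every density:
the term `c = 0` then contributes at most `1`, and each of the others at most `1/r₀`.
-/

open Submodule

lemma chi2_add (a b : ZMod 2) : chi2 (a + b) = chi2 a * chi2 b := by
  unfold chi2
  rw [← pow_add, neg_one_pow_eq_pow_mod_two, neg_one_pow_eq_pow_mod_two (n := a.val + b.val)]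
  congr 1
  revert a b
  decide

lemma chi2_one : chi2 1 = -1 := by
  norm_num [chi2, show ZMod.val (1 : ZMod 2) = 1 from rfl]

lemma norm_chi2 (a : ZMod 2) : ‖chi2 a‖ = 1 := by
  simp [chi2]

lemma dot2_add {n : ℕ} (r a b : Fin n → ZMod 2) : dot2 r (a + b) = dot2 r a + dot2 r b :=
  dotProduct_add r a b

lemma sum_chi2_eq_zero {G : Type*} [AddCommGroup G] [Fintype G] (φ : G →+ ZMod 2) {g₀ : G}
    (hg₀ : φ g₀ ≠ 0) : ∑ g, chi2 (φ g) = 0 := by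
  have hφ : φ g₀ = 1 := (by decide : ∀ a : ZMod 2, a ≠ 0 → a = 1) _ hg₀
  have hshift : ∑ g, chi2 (φ (g + g₀)) = ∑ g, chi2 (φ g) :=
    Fintype.sum_equiv (Equiv.addRight g₀) _ _ fun _ => rfl
  simp only [map_add, hφ, chi2_add, chi2_one, mul_neg_one, Finset.sum_neg_distrib] at hshift
  linear_combination -hshift / 2

lemma norm_sum_mul_le_sum_abs_sub {ι : Type*} [Fintype ι] (χ : ι → ℂ) (hχ : ∑ i, χ i = 0)
    (hχ_norm : ∀ i, ‖χ i‖ ≤ 1) (D : ι → ℝ) (a : ℝ) :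
    ‖∑ i, χ i * D i‖ ≤ ∑ i, |D i - a| := by
  have hcenter : ∑ i, χ i * D i = ∑ i, χ i * ((D i - a : ℝ) : ℂ) := by
    simp only [Complex.ofReal_sub, mul_sub, Finset.sum_sub_distrib, ← Finset.sum_mul, hχ,
      zero_mul, sub_zero]
  rw [hcenter]
  refine (norm_sum_le _ _).trans (Finset.sum_le_sum fun i _ => ?_)
  rw [norm_mul, Complex.norm_real, Real.norm_eq_abs]
  exact mul_le_of_le_one_left (abs_nonneg _) (hχ_norm i)

section SupSpan

variable {R M ι : Type*} [Ring R] [AddCommGroup M] [Module R M] [Fintype ι]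
  {W : Submodule R M} {x : ι → M}

lemma exists_linearCombination_add_of_mem_sup_span {v : M} (hv : v ∈ W ⊔ span R (Set.range x)) :
    ∃ c, ∃ w ∈ W, Fintype.linearCombination R x c + w = v := by
  obtain ⟨w, hw, s, hs, rfl⟩ := mem_sup.mp hv
  rw [← Fintype.range_linearCombination] at hs
  obtain ⟨c, rfl⟩ := hs
  exact ⟨c, w, hw, add_comm _ _⟩

lemma linearCombination_add_mem_sup_span (c : ι → R) {w : M} (hw : w ∈ W) :
    Fintype.linearCombination R x c + w ∈ W ⊔ span R (Set.range x) :=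
  add_mem (mem_sup_right (Fintype.range_linearCombination R x ▸ LinearMap.mem_range_self _ c))
    (mem_sup_left hw)

lemma bijective_linearCombination_add
    (hx : LinearIndependent R fun i => Submodule.Quotient.mk (p := W) (x i)) :
    Function.Bijective fun p : (ι → R) × W =>
      (⟨Fintype.linearCombination R x p.1 + p.2,
        linearCombination_add_mem_sup_span p.1 p.2.2⟩ : ↥(W ⊔ span R (Set.range x))) := by
  constructor
  · rintro ⟨c, w⟩ ⟨c', w'⟩ h
    have h' : Fintype.linearCombination R x c + w = Fintype.linearCombination R x c' + w' :=
      congrArg Subtype.val h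
    have hmem : Fintype.linearCombination R x (c - c') ∈ W := by
      rw [map_sub, sub_eq_sub_iff_add_eq_add.mpr (h'.trans (add_comm _ _))]
      exact sub_mem w'.2 w.2
    have hc : c = c' := by
      rw [← sub_eq_zero]
      funext i
      refine Fintype.linearIndependent_iff.mp hx _ ?_ i
      rw [← (Quotient.mk_eq_zero W).mpr hmem, Fintype.linearCombination_apply, ← mkQ_apply,
        map_sum]
      simp only [map_smul, mkQ_apply]
    subst hc
    exact Prod.ext rfl (Subtype.ext (add_left_cancel h'))
  · rintro ⟨v, hv⟩
    obtain ⟨c, w, hw, rfl⟩ := exists_linearCombination_add_of_mem_sup_span hv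
    exact ⟨(c, ⟨w, hw⟩), rfl⟩

lemma sum_sup_span_eq [Fintype M] [Fintype R] [DecidableEq ι] {β : Type*} [AddCommMonoid β]
    (hx : LinearIndependent R fun i => Submodule.Quotient.mk (p := W) (x i)) (f : M → β) :
    ∑ v : ↥(W ⊔ span R (Set.range x)), f v =
      ∑ c : ι → R, ∑ w : W, f (Fintype.linearCombination R x c + w) := by
  rw [← Fintype.sum_prod_type']
  exact (Fintype.sum_bijective _ (bijective_linearCombination_add hx) _ _ fun _ => rfl).symm

end SupSpan

section Coset

variable {n : ℕ} (A : Set (Fin n → ZMod 2)) (y : Fin n → ZMod 2)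
  {W : Submodule (ZMod 2) (Fin n → ZMod 2)} {r : Fin n → ZMod 2}

lemma fcoset2_sup_span {d : ℕ} {x : Fin d → Fin n → ZMod 2}
    (hx : LinearIndependent (ZMod 2) fun i => Submodule.Quotient.mk (p := W) (x i)) :
    fcoset2 A y (W ⊔ span (ZMod 2) (Set.range x)) r =
      (∑ c, fcoset2 A (y + Fintype.linearCombination (ZMod 2) x c) W r) / 2 ^ d := by
  have hcard : (Fintype.card ↥(W ⊔ span (ZMod 2) (Set.range x)) : ℂ) = 2 ^ d * Fintype.card W := by
    simpa using congrArg (Nat.cast (R := ℂ)) (sum_sup_span_eq hx fun _ => 1)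
  unfold fcoset2
  rw [sum_sup_span_eq hx fun v => if y + v ∈ A then chi2 (dot2 r (y + v)) else 0, hcard,
    ← Finset.sum_div, div_div, mul_comm]
  simp only [add_assoc]

lemma fcoset2_eq_chi2_mul_dens2 (hrW : ∀ w ∈ W, dot2 r w = 0) :
    fcoset2 A y W r = chi2 (dot2 r y) * dens2 A y W := by
  unfold fcoset2 dens2
  push_cast
  rw [mul_div_assoc', Finset.mul_sum]
  congr 1
  refine Finset.sum_congr rfl fun w _ => ?_
  rw [dot2_add, hrW w w.2, add_zero]
  split_ifs <;> simp

lemma abs_dens2_sub_le_one {a : ℝ} (ha₀ : 0 ≤ a) (ha₁ : a ≤ 1) : |dens2 A y W - a| ≤ 1 := by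
  have hdens₀ : 0 ≤ dens2 A y W := by
    unfold dens2
    positivity
  have hdens₁ : dens2 A y W ≤ 1 := by
    unfold dens2
    rw [Finset.sum_boole, div_le_one (by positivity)]
    exact_mod_cast Finset.card_filter_le _ _
  rw [abs_le]
  constructor <;> linarith

end Coset

lemma linearCombination_zmod_two_eq_sum_filter {ι M : Type*} [Fintype ι] [AddCommGroup M]
    [Module (ZMod 2) M] (x : ι → M) (c : ι → ZMod 2) :
    Fintype.linearCombination (ZMod 2) x c = ∑ i ∈ univ.filter (fun i => c i ≠ 0), x i := by
  rw [Fintype.linearCombination_apply, Finset.sum_filter]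
  refine Finset.sum_congr rfl fun i _ => ?_
  rcases (by decide : ∀ a : ZMod 2, a = 0 ∨ a = 1) (c i) with h | h <;> simp [h]

theorem uniformity_inside_W_perp_general {n d r₀ : ℕ}
    (A : Set (Fin n → ZMod 2)) (W : Submodule (ZMod 2) (Fin n → ZMod 2))
    (x : Fin d → (Fin n → ZMod 2))
    (hx : LinearIndependent (ZMod 2) fun i => Submodule.Quotient.mk (p := W) (x i))
    (j : ℕ) (hj : j ≤ r₀)
    (hdens : ∀ I : Finset (Fin d), I.Nonempty →
      (j : ℝ) / r₀ ≤ dens2 A (∑ i ∈ I, x i) W ∧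
      dens2 A (∑ i ∈ I, x i) W < ((j : ℝ) + 1) / r₀)
    (V : Submodule (ZMod 2) (Fin n → ZMod 2))
    (hV : V = W ⊔ Submodule.span (ZMod 2) (Set.range x)) :
    ∀ r : Fin n → ZMod 2, (∀ w ∈ W, dot2 r w = 0) → (∃ v ∈ V, dot2 r v ≠ 0) →
      ‖fcoset2 A 0 V r‖ ≤ ((2 : ℝ) ^ d)⁻¹ + 1 / r₀ := by
  rintro r hrW ⟨v, hv, hrv⟩
  subst hV
  set L := Fintype.linearCombination (ZMod 2) x
  let φ : (Fin d → ZMod 2) →+ ZMod 2 :=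
    AddMonoidHom.mk' (fun c => dot2 r (L c)) fun a b => by rw [map_add, dot2_add]
  obtain ⟨c₀, w, hw, rfl⟩ := exists_linearCombination_add_of_mem_sup_span hv
  have hc₀ : φ c₀ ≠ 0 := by simpa [φ, dot2_add, hrW w hw] using hrv
  have hdev : ∀ c, |dens2 A (L c) W - j / r₀| ≤ (if c = 0 then (1 : ℝ) else 0) + 1 / r₀ := by
    intro c
    by_cases hc : c = 0
    · rw [if_pos hc]
      refine (abs_dens2_sub_le_one A _ (by positivity) ?_).trans (le_add_of_nonneg_right ?_)
      · exact div_le_one_of_le₀ (by exact_mod_cast hj) (Nat.cast_nonneg _)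
      · positivity
    · have hI : (univ.filter fun i => c i ≠ 0).Nonempty := by
        simpa [Finset.filter_nonempty_iff, Function.ne_iff] using hc
      obtain ⟨hlo, hhi⟩ := hdens _ hI
      rw [← linearCombination_zmod_two_eq_sum_filter] at hlo hhi
      rw [if_neg hc, zero_add, abs_le]
      constructor <;> linarith [add_div (j : ℝ) 1 r₀]
  rw [fcoset2_sup_span A 0 hx, norm_div]
  simp only [zero_add, fcoset2_eq_chi2_mul_dens2 A _ hrW, norm_pow, Complex.norm_ofNat]
  calc ‖∑ c, chi2 (φ c) * dens2 A (L c) W‖ / 2 ^ d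
      ≤ (∑ c, |dens2 A (L c) W - j / r₀|) / 2 ^ d := by
        gcongr
        exact norm_sum_mul_le_sum_abs_sub _ (sum_chi2_eq_zero φ hc₀) (fun _ => (norm_chi2 _).le) _ _
    _ ≤ (∑ c : Fin d → ZMod 2, ((if c = 0 then (1 : ℝ) else 0) + 1 / r₀)) / 2 ^ d :=
        div_le_div_of_nonneg_right (Finset.sum_le_sum fun c _ => hdev c) (by positivity)
    _ = ((2 : ℝ) ^ d)⁻¹ + 1 / r₀ := by
        simp [Finset.sum_add_distrib]
        field_simp

/-- if the density of `A` on every coset `(∑_{i∈I} xᵢ) + W`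
(`I ≠ ∅`) lies in a common window `[j/r₀, (j+1)/r₀)`, then for
`V = W + ⟨x₁,…,x_d⟩` and every `r ∈ W^⊥ \ V^⊥` we have
`|(1_A μ_V)^∧(r)| ≤ 2^{-d} + 1/r₀`. -/
theorem uniformity_inside_W_perp {n d r₀ : ℕ} (hd : 1 ≤ d) (hr₀ : 1 ≤ r₀)
    (A : Set (Fin n → ZMod 2)) (W : Submodule (ZMod 2) (Fin n → ZMod 2))
    (x : Fin d → (Fin n → ZMod 2))
    (hx : LinearIndependent (ZMod 2) fun i => Submodule.Quotient.mk (p := W) (x i))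
    (j : ℕ) (hj : j ≤ r₀)
    (hdens : ∀ I : Finset (Fin d), I.Nonempty →
      (j : ℝ) / r₀ ≤ dens2 A (∑ i ∈ I, x i) W ∧
      dens2 A (∑ i ∈ I, x i) W < ((j : ℝ) + 1) / r₀)
    (V : Submodule (ZMod 2) (Fin n → ZMod 2))
    (hV : V = W ⊔ Submodule.span (ZMod 2) (Set.range x)) :
    ∀ r : Fin n → ZMod 2, (∀ w ∈ W, dot2 r w = 0) → (∃ v ∈ V, dot2 r v ≠ 0) →
      ‖fcoset2 A 0 V r‖ ≤ ((2 : ℝ) ^ d)⁻¹ + 1 / r₀ :=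
  uniformity_inside_W_perp_general A W x hx j hj hdens V hV
end
end

section
/- Over 𝔽₃, the conclusion of the main theorem fails quantitatively: there is an absolute constant c = √3/6 > 0 such that for every n there exists A ⊆ 𝔽₃ⁿ with the property that no subspace V ≤ 𝔽₃ⁿ of positive dimension makes A c-uniform on V; equivalently, for every positive-dimensional subspace V there exists r ∉ V^⊥ with |(1_A μ_V)^∧(r)| > √3/6 − δ for every δ > 0 (in fact ≥ √3/6). -/
open scoped Classical
open Finset
noncomputable section

/-- Dot product on `𝔽₃ⁿ`. -/
def dot3 {n : ℕ} (r x : Fin n → ZMod 3) : ZMod 3 := ∑ i, r i * x i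

/-- The additive character `t ↦ e^{-2πit/3}` of `𝔽₃`. -/
def chi3 (t : ZMod 3) : ℂ :=
  Complex.exp (-(2 * Real.pi * Complex.I) * (t.val : ℂ) / 3)

/-- `(1_A μ_V)^∧(r) = |V|⁻¹ ∑_{v ∈ V} 1_A(v) e^{-2πi (r·v)/3}`. -/
def fsub3 {n : ℕ} (A : Set (Fin n → ZMod 3))
    (V : Submodule (ZMod 3) (Fin n → ZMod 3)) (r : Fin n → ZMod 3) : ℂ :=
  (∑ v : V, if (v : Fin n → ZMod 3) ∈ A then
      chi3 (dot3 r (v : Fin n → ZMod 3)) else 0) / (Fintype.card V)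


/-!
Let `A` be the set of vectors whose first nonzero coordinate is `1`. Given `V ≠ 0`, let `p` be the
first coordinate on which `V` does not vanish identically and take `r = e_p`. Every `v ∈ V` vanishes
before `p`, so `v ∈ A` when `v p = 1` and `v ∉ A` when `v p = 2`; the vectors with `v p = 0`
contribute `χ(0) = 1`, which is real. Since `v ↦ v p` maps `V` onto `𝔽₃`, a third of `V` has
`v p = 1`, so the imaginary part of `(1_A μ_V)^∧(e_p)` is `(1/3) · Im χ(1) = -√3/6`.
-/

lemma chi3_zero : chi3 0 = 1 := by
  simp [chi3]

lemma im_chi3_one : (chi3 1).im = -(√3 / 2) := by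
  have h : -(2 * (Real.pi : ℂ) * Complex.I) * (((1 : ZMod 3).val : ℕ) : ℂ) / 3
      = ((-(2 * Real.pi / 3) : ℝ) : ℂ) * Complex.I := by
    rw [show ((1 : ZMod 3).val : ℕ) = 1 from rfl]
    push_cast
    ring
  rw [chi3, h, Complex.exp_ofReal_mul_I_im, Real.sin_neg,
    show 2 * Real.pi / 3 = Real.pi - Real.pi / 3 by ring, Real.sin_pi_sub, Real.sin_pi_div_three]

lemma dot3_single {n : ℕ} (p : Fin n) (v : Fin n → ZMod 3) : dot3 (Pi.single p 1) v = v p := by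
  simp [dot3, Pi.single_apply]

namespace AddMonoidHom

variable {G H : Type*} [AddGroup G] [Fintype G] [AddCommGroup H]

lemma card_fiber_eq_of_surjective (f : G →+ H) (hf : Function.Surjective f) (a b : H) :
    #{g | f g = a} = #{g | f g = b} := by
  obtain ⟨c, hc⟩ := hf (b - a)
  refine card_bij' (fun g _ => g + c) (fun g _ => g - c) ?_ ?_ ?_ ?_ <;>
    simp_all [sub_eq_add_neg]

lemma card_eq_card_mul_card_fiber [Fintype H] (f : G →+ H) (hf : Function.Surjective f) (a : H) :
    Fintype.card G = Fintype.card H * #{g | f g = a} := by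
  rw [← card_univ, card_eq_sum_card_fiberwise (f := f) (t := univ) (fun _ _ => mem_univ _),
    sum_congr rfl fun b _ => card_fiber_eq_of_surjective f hf b a, sum_const, smul_eq_mul,
    card_univ]

end AddMonoidHom

def leadingOneSet (K : Type*) [Zero K] [One K] (n : ℕ) : Set (Fin n → K) :=
  {x | ∃ i, (∀ j < i, x j = 0) ∧ x i = 1}

lemma mem_leadingOneSet_iff_of_pivot {K : Type*} [Zero K] [One K] [NeZero (1 : K)] {n : ℕ}
    {x : Fin n → K} {p : Fin n} (hlow : ∀ j < p, x j = 0) (hp : x p ≠ 0) :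
    x ∈ leadingOneSet K n ↔ x p = 1 := by
  refine ⟨fun ⟨i, hi, hxi⟩ => ?_, fun h => ⟨p, hlow, h⟩⟩
  rcases lt_trichotomy i p with h | rfl | h
  · exact absurd (hlow i h ▸ hxi) zero_ne_one
  · exact hxi
  · exact absurd (hi p h) hp

lemma Submodule.exists_pivot {K : Type*} [Field K] {n : ℕ} {V : Submodule K (Fin n → K)}
    (hV : V ≠ ⊥) : ∃ p, (∀ v ∈ V, ∀ j < p, v j = 0) ∧ ∃ u ∈ V, u p = 1 := by
  obtain ⟨w, hwV, hw⟩ := V.exists_mem_ne_zero_of_ne_bot hV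
  obtain ⟨i, hi⟩ := Function.ne_iff.mp hw
  obtain ⟨p, ⟨u, huV, hup⟩, hmin⟩ :=
    wellFounded_lt.has_min {j | ∃ v ∈ V, v j ≠ 0} ⟨i, w, hwV, hi⟩
  refine ⟨p, fun v hv j hj => ?_, (u p)⁻¹ • u, V.smul_mem _ huV, inv_mul_cancel₀ hup⟩
  by_contra h
  exact hmin j ⟨v, hv, h⟩ hj

lemma im_fsub3_leadingOneSet {n : ℕ} {V : Submodule (ZMod 3) (Fin n → ZMod 3)} {p : Fin n}
    (hlow : ∀ v ∈ V, ∀ j < p, v j = 0) {u : Fin n → ZMod 3} (huV : u ∈ V) (hup : u p = 1) :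
    (fsub3 (leadingOneSet (ZMod 3) n) V (Pi.single p 1)).im = -(√3 / 6) := by
  let f : V →+ ZMod 3 := ((LinearMap.proj p).comp V.subtype).toAddMonoidHom
  have hf : Function.Surjective f := fun t => ⟨⟨t • u, V.smul_mem t huV⟩, by simp [f, hup]⟩
  have hterm (v : V) : (if (v : Fin n → ZMod 3) ∈ leadingOneSet (ZMod 3) n then
      chi3 (dot3 (Pi.single p 1) v) else 0).im = if f v = 1 then -(√3 / 2) else 0 := by
    change _ = if (v : Fin n → ZMod 3) p = 1 then _ else _
    rw [dot3_single]
    by_cases h0 : (v : Fin n → ZMod 3) p = 0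
    · simp [h0, chi3_zero, apply_ite Complex.im]
    · simp only [mem_leadingOneSet_iff_of_pivot (hlow v v.2) h0]
      split_ifs with h1 <;> simp [h1, im_chi3_one]
  have hcard := f.card_eq_card_mul_card_fiber hf 1
  rw [fsub3, Complex.div_natCast_im, Complex.im_sum, sum_congr rfl fun v _ => hterm v,
    ← sum_filter, sum_const, nsmul_eq_mul, hcard, ZMod.card]
  obtain ⟨v₁, hv₁⟩ := hf 1
  have : (#{v | f v = 1} : ℝ) ≠ 0 := by
    exact_mod_cast (card_pos.mpr ⟨v₁, mem_filter.mpr ⟨mem_univ _, hv₁⟩⟩).ne'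
  push_cast
  field_simp
  norm_num

/-- over `𝔽₃` the main theorem fails quantitatively: for every
`n` there is `A ⊆ 𝔽₃ⁿ` such that no positive-dimensional subspace `V` makes
`A` `(√3/6)`-uniform — indeed some `r ∉ V^⊥` has `|(1_A μ_V)^∧(r)| ≥ √3/6`. -/
theorem main_theorem_fails_over_F3 (n : ℕ) :
    ∃ A : Set (Fin n → ZMod 3),
      ∀ V : Submodule (ZMod 3) (Fin n → ZMod 3), 0 < Module.finrank (ZMod 3) V →
        ∃ r : Fin n → ZMod 3, (∃ v ∈ V, dot3 r v ≠ 0) ∧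
          Real.sqrt 3 / 6 ≤ ‖fsub3 A V r‖ := by
  refine ⟨leadingOneSet (ZMod 3) n, fun V hV => ?_⟩
  have hV : V ≠ ⊥ := fun h => hV.ne' (Submodule.finrank_eq_zero.mpr h)
  obtain ⟨p, hlow, u, huV, hup⟩ := Submodule.exists_pivot hV
  refine ⟨Pi.single p 1, ⟨u, huV, by rw [dot3_single, hup]; decide⟩, ?_⟩
  calc √3 / 6 = |(fsub3 (leadingOneSet (ZMod 3) n) V (Pi.single p 1)).im| := by
        rw [im_fsub3_leadingOneSet hlow huV hup, abs_neg, abs_of_nonneg (by positivity)]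
    _ ≤ _ := Complex.abs_im_le_norm _
end
end
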